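/- arXiv:math-ph/0503032 — 2 statements merged into one kernel-verified Lean document; each statement's English description precedes it below -/
import Mathlib

section
/- Let V be a unitary operator on a Hilbert space and A a bounded self-adjoint operator. Define C = V·(V*A − AV*). If C ≥ 0 (positive semidefinite), then for every φ in the Hilbert space, Σ_{n=a}^{b} ‖C^{1/2} Vⁿ φ‖² ≤ 2‖A‖·‖φ‖² for all integers a ≤ b. In particular the infinite sum Σ_{n∈ℤ} ‖C^{1/2} Vⁿ φ‖² is bounded by 2‖A‖·‖φ‖². -/
open scoped InnerProductSpace

/-- Let `V` be unitary and `A` bounded self-adjoint on a Hilbert space, and set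
`C = V(V*A − AV*)`.  If `C ≥ 0`, then for any self-adjoint square root `R` of `C`
(`R*R = C`, e.g. `R = C^{1/2}`) and every `φ`,
`Σ_{n=a}^{b} ‖R Vⁿ φ‖² ≤ 2‖A‖‖φ‖²` for all integers `a ≤ b`, and also
`Σ_{n∈ℤ} ‖R Vⁿ φ‖² ≤ 2‖A‖‖φ‖²`. -/
theorem stmt5 {H : Type*} [NormedAddCommGroup H] [InnerProductSpace ℂ H] [CompleteSpace H]
    (V : unitary (H →L[ℂ] H)) (A : H →L[ℂ] H) (hA : IsSelfAdjoint A)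
    (C : H →L[ℂ] H)
    (hC : C = (V : H →L[ℂ] H) * ((star (V : H →L[ℂ] H)) * A - A * star (V : H →L[ℂ] H)))
    (hpos : C.IsPositive)
    (R : H →L[ℂ] H) (hRsa : IsSelfAdjoint R) (hR : star R * R = C) (φ : H) :
    (∀ a b : ℤ, a ≤ b →
        ∑ n ∈ Finset.Icc a b, ‖R (((V ^ n : unitary (H →L[ℂ] H)) : H →L[ℂ] H) φ)‖ ^ 2 ≤
          2 * ‖A‖ * ‖φ‖ ^ 2) ∧
    ∑' n : ℤ, ‖R (((V ^ n : unitary (H →L[ℂ] H)) : H →L[ℂ] H) φ)‖ ^ 2 ≤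
      2 * ‖A‖ * ‖φ‖ ^ 2 := by
  have hVs : star (V : H →L[ℂ] H) * (V : H →L[ℂ] H) = 1 := Unitary.star_mul_self_of_mem V.2
  have hVs' : (V : H →L[ℂ] H) * star (V : H →L[ℂ] H) = 1 := Unitary.mul_star_self_of_mem V.2
  set u : ℤ → (H →L[ℂ] H) := fun n => ((V ^ n : unitary (H →L[ℂ] H)) : H →L[ℂ] H) with hu
  have hun : ∀ n : ℤ, star (u n) * u n = 1 := fun n => Unitary.star_mul_self_of_mem (V ^ n).2
  have hstep : ∀ n : ℤ, u n = (V : H →L[ℂ] H) * u (n - 1) := by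
    intro n
    have h : (V : unitary (H →L[ℂ] H)) ^ n = V * V ^ (n - 1) := by
      rw [← zpow_one_add]; ring_nf
    show ((V ^ n : unitary (H →L[ℂ] H)) : H →L[ℂ] H) = _
    rw [h]; rfl
  have hVstar : ∀ n : ℤ, star (V : H →L[ℂ] H) (u n φ) = u (n - 1) φ := by
    intro n
    rw [hstep n]
    have : star (V : H →L[ℂ] H) ((V : H →L[ℂ] H) (u (n - 1) φ))
        = (star (V : H →L[ℂ] H) * (V : H →L[ℂ] H)) (u (n - 1) φ) := rfl
    simp only [ContinuousLinearMap.mul_apply]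
    rw [show star (V : H →L[ℂ] H) ((V : H →L[ℂ] H) (u (n - 1) φ))
        = (star (V : H →L[ℂ] H) * (V : H →L[ℂ] H)) (u (n - 1) φ) from rfl, hVs]
    rfl
  have hiso : ∀ n : ℤ, ‖u n φ‖ ^ 2 = ‖φ‖ ^ 2 := by
    intro n
    rw [@norm_sq_eq_re_inner ℂ, @norm_sq_eq_re_inner ℂ]
    congr 1
    calc ⟪u n φ, u n φ⟫_ℂ = ⟪(ContinuousLinearMap.adjoint (u n)) (u n φ), φ⟫_ℂ := by
          rw [ContinuousLinearMap.adjoint_inner_left]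
      _ = ⟪(star (u n) * u n) φ, φ⟫_ℂ := by rw [← ContinuousLinearMap.star_eq_adjoint]; rfl
      _ = ⟪φ, φ⟫_ℂ := by rw [hun]; rfl
  set g : ℤ → ℝ := fun n => RCLike.re ⟪u n φ, A (u n φ)⟫_ℂ with hg
  have hterm : ∀ n : ℤ, ‖R (u n φ)‖ ^ 2 = g n - g (n - 1) := by
    intro n
    have h1 : ⟪R (u n φ), R (u n φ)⟫_ℂ = ⟪u n φ, C (u n φ)⟫_ℂ := by
      calc ⟪R (u n φ), R (u n φ)⟫_ℂ
          = ⟪(ContinuousLinearMap.adjoint R) (R (u n φ)), u n φ⟫_ℂ :=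
            (ContinuousLinearMap.adjoint_inner_left R (u n φ) (R (u n φ))).symm
        _ = ⟪(star R * R) (u n φ), u n φ⟫_ℂ := by rw [← ContinuousLinearMap.star_eq_adjoint]; rfl
        _ = ⟪C (u n φ), u n φ⟫_ℂ := by rw [hR]
        _ = ⟪u n φ, C (u n φ)⟫_ℂ := by
            rw [← ContinuousLinearMap.adjoint_inner_left C, hpos.isSelfAdjoint.adjoint_eq]
    have h2 : C (u n φ) = A (u n φ) - (V : H →L[ℂ] H) (A (u (n - 1) φ)) := by
      rw [hC]
      simp only [ContinuousLinearMap.mul_apply, ContinuousLinearMap.sub_apply]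
      rw [hVstar n, map_sub]
      congr 1
      rw [show (V : H →L[ℂ] H) (star (V : H →L[ℂ] H) (A (u n φ)))
          = ((V : H →L[ℂ] H) * star (V : H →L[ℂ] H)) (A (u n φ)) from rfl, hVs']
      rfl
    have h3 : ⟪u n φ, (V : H →L[ℂ] H) (A (u (n - 1) φ))⟫_ℂ = ⟪u (n - 1) φ, A (u (n - 1) φ)⟫_ℂ := by
      rw [← ContinuousLinearMap.adjoint_inner_left (V : H →L[ℂ] H),
        ← ContinuousLinearMap.star_eq_adjoint]
      exact congrArg (fun x => ⟪x, A (u (n - 1) φ)⟫_ℂ) (hVstar n)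
    rw [@norm_sq_eq_re_inner ℂ, h1, h2, inner_sub_right, map_sub, h3]
  have hgb : ∀ n : ℤ, |g n| ≤ ‖A‖ * ‖φ‖ ^ 2 := by
    intro n
    have h1 : |g n| ≤ ‖⟪u n φ, A (u n φ)⟫_ℂ‖ := by
      exact Complex.abs_re_le_norm ⟪u n φ, A (u n φ)⟫_ℂ
    have h2 : ‖⟪u n φ, A (u n φ)⟫_ℂ‖ ≤ ‖u n φ‖ * ‖A (u n φ)‖ := norm_inner_le_norm _ _
    have h3 : ‖A (u n φ)‖ ≤ ‖A‖ * ‖u n φ‖ := A.le_opNorm _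
    have h4 : ‖u n φ‖ * ‖A (u n φ)‖ ≤ ‖A‖ * ‖u n φ‖ ^ 2 := by nlinarith [norm_nonneg (u n φ)]
    calc |g n| ≤ ‖u n φ‖ * ‖A (u n φ)‖ := h1.trans h2
      _ ≤ ‖A‖ * ‖u n φ‖ ^ 2 := h4
      _ = ‖A‖ * ‖φ‖ ^ 2 := by rw [hiso]
  have htel : ∀ a b : ℤ, a ≤ b → ∑ n ∈ Finset.Icc a b, ‖R (u n φ)‖ ^ 2 = g b - g (a - 1) := by
    intro a
    refine fun b hab => Int.le_induction (motive := fun b _ => ∑ n ∈ Finset.Icc a b, ‖R (u n φ)‖ ^ 2 = g b - g (a - 1)) ?_ ?_ b hab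
    · show ∑ n ∈ Finset.Icc a a, ‖R (u n φ)‖ ^ 2 = g a - g (a - 1)
      rw [Finset.Icc_self, Finset.sum_singleton, hterm]
    · intro b hb ih
      show ∑ n ∈ Finset.Icc a (b + 1), ‖R (u n φ)‖ ^ 2 = g (b + 1) - g (a - 1)
      replace ih : ∑ n ∈ Finset.Icc a b, ‖R (u n φ)‖ ^ 2 = g b - g (a - 1) := ih
      have hins : Finset.Icc a (b + 1) = insert (b + 1) (Finset.Icc a b) := by
        ext x
        simp only [Finset.mem_insert, Finset.mem_Icc]
        omega
      have hnotin : b + 1 ∉ Finset.Icc a b := by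
        simp only [Finset.mem_Icc]
        omega
      rw [hins, Finset.sum_insert hnotin, ih, hterm]
      ring_nf
  have hbound : ∀ a b : ℤ, a ≤ b → ∑ n ∈ Finset.Icc a b, ‖R (u n φ)‖ ^ 2 ≤ 2 * ‖A‖ * ‖φ‖ ^ 2 := by
    intro a b hab
    rw [htel a b hab]
    have := hgb b
    have := hgb (a - 1)
    have h1 := abs_le.mp (hgb b)
    have h2 := abs_le.mp (hgb (a - 1))
    linarith
  refine ⟨hbound, ?_⟩
  have hc0 : (0 : ℝ) ≤ 2 * ‖A‖ * ‖φ‖ ^ 2 := by positivity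
  refine tsum_le_of_sum_le' hc0 fun s => ?_
  rcases s.eq_empty_or_nonempty with rfl | hs
  · simpa using hc0
  · calc ∑ n ∈ s, ‖R (u n φ)‖ ^ 2
        ≤ ∑ n ∈ Finset.Icc (s.min' hs) (s.max' hs), ‖R (u n φ)‖ ^ 2 := by
          refine Finset.sum_le_sum_of_subset_of_nonneg ?_ (fun i _ _ => by positivity)
          intro i hi
          exact Finset.mem_Icc.mpr ⟨s.min'_le i hi, s.le_max' i hi⟩
      _ ≤ 2 * ‖A‖ * ‖φ‖ ^ 2 := hbound _ _ (s.min'_le _ (s.max'_mem hs))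
end

section
/- Let H be a self-adjoint operator on a separable Hilbert space with complete orthonormal eigenbasis (φ_n) and A a bounded operator with Σ_{n=1}^∞ ‖A φ_n‖ < ∞ (A is strongly H-finite). Then A is trace class. -/
open scoped InnerProductSpace

/-- An operator between Hilbert spaces is trace class iff it admits a nuclear
representation `A x = Σ_n s_n ⟨g_n, x⟩ k_n` with `s_n ≥ 0` summable and `‖g_n‖, ‖k_n‖ ≤ 1`
(equivalently, the singular values are summable). -/
def IsTraceClassOp {H K : Type*} [NormedAddCommGroup H] [InnerProductSpace ℂ H]
    [NormedAddCommGroup K] [InnerProductSpace ℂ K] (A : H →L[ℂ] K) : Prop :=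
  ∃ (s : ℕ → ℝ) (g : ℕ → H) (k : ℕ → K),
    (∀ n, 0 ≤ s n) ∧ (∀ n, ‖g n‖ ≤ 1) ∧ (∀ n, ‖k n‖ ≤ 1) ∧ Summable s ∧
    ∀ x : H, HasSum (fun n => (s n : ℂ) • (⟪g n, x⟫_ℂ • k n)) (A x)

/-- If `T` is a self-adjoint operator on a separable Hilbert space with a complete
orthonormal eigenbasis `(φ_n)`, and `A` is a bounded operator that is strongly `T`-finite,
i.e. `Σ_n ‖A φ_n‖ < ∞`, then `A` is trace class. -/
theorem stmt7 {H K : Type*} [NormedAddCommGroup H] [InnerProductSpace ℂ H] [CompleteSpace H]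
    [NormedAddCommGroup K] [InnerProductSpace ℂ K] [CompleteSpace K]
    (T : H →L[ℂ] H) (hT : IsSelfAdjoint T)
    (φ : ℕ → H) (hON : Orthonormal ℂ φ)
    (hcomplete : (Submodule.span ℂ (Set.range φ)).topologicalClosure = ⊤)
    (α : ℕ → ℝ) (heig : ∀ n, T (φ n) = (α n : ℂ) • φ n)
    (A : H →L[ℂ] K) (hA : Summable fun n => ‖A (φ n)‖) :
    IsTraceClassOp A := by
  classical
  let b : HilbertBasis ℕ ℂ H := HilbertBasis.mk hON (le_of_eq hcomplete.symm)
  have hb : ∀ n, b n = φ n := fun n => congrFun (HilbertBasis.coe_mk hON _) n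
  refine ⟨fun n => ‖A (φ n)‖, φ, fun n => (‖A (φ n)‖⁻¹ : ℝ) • A (φ n),
    fun n => norm_nonneg _, fun n => le_of_eq (hON.1 n),
    fun n => ?_, hA, fun x => ?_⟩
  · rw [norm_smul, norm_inv, norm_norm]
    rcases eq_or_ne (A (φ n)) 0 with h | h
    · simp [h]
    · rw [inv_mul_cancel₀ (norm_ne_zero_iff.mpr h)]
  · have h1 : HasSum (fun n => b.repr x n • b n) x := b.hasSum_repr x
    have h2 : HasSum (fun n => A (b.repr x n • b n)) (A x) := A.hasSum h1
    convert h2 using 2 with n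
    rw [map_smul, hb, b.repr_apply_apply, hb]
    rcases eq_or_ne (A (φ n)) 0 with h | h
    · simp [h]
    · show (‖A (φ n)‖ : ℂ) • (⟪φ n, x⟫_ℂ • ‖A (φ n)‖⁻¹ • A (φ n)) = _
      rw [smul_comm ((‖A (φ n)‖ : ℂ)) (⟪φ n, x⟫_ℂ)]
      congr 1
      rw [Complex.coe_smul, smul_smul, mul_inv_cancel₀ (norm_ne_zero_iff.mpr h), one_smul]
end
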